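/- arXiv:2407.05539 — 4 statements merged into one kernel-verified Lean document; each statement's English description precedes it below -/
import Mathlib

section
/- Let k be an algebraically closed field and let A, B ∈ k[t] be polynomials, not both zero. Then there exists a unique monic polynomial z ∈ k[t] such that z⁴ divides A, z⁶ divides B, and the quotients A₀ = A/z⁴ and B₀ = B/z⁶ satisfy the minimality condition: there is no point p ∈ k at which A₀ vanishes to order at least 4 and simultaneously B₀ vanishes to order at least 6 (where the zero polynomial is regarded as vanishing to every order at every point). In other words, any pair of log canonical Weierstrass data (A, B) factors uniquely as A = A₀·z⁴, B = B₀·z⁶ with (A₀, B₀) minimal. -/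
open Polynomial

private lemma rm_pow {R : Type*} [CommRing R] [IsDomain R] {z : R[X]} (hz : z ≠ 0)
    (p : R) (n : ℕ) : rootMultiplicity p (z ^ n) = n * rootMultiplicity p z := by
  induction n with
  | zero => simp [rootMultiplicity_eq_zero, IsRoot]
  | succ n ih =>
    rw [pow_succ, rootMultiplicity_mul (mul_ne_zero (pow_ne_zero _ hz) hz), ih]; ring

private lemma ex_aux {k : Type*} [Field k] :
    ∀ n : ℕ, ∀ A B : k[X], ¬(A = 0 ∧ B = 0) → A.natDegree + B.natDegree ≤ n →
    ∃ z : k[X], z.Monic ∧ ∃ A₀ B₀ : k[X], A = A₀ * z ^ 4 ∧ B = B₀ * z ^ 6 ∧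
      ∀ p : k, ¬((A₀ = 0 ∨ 4 ≤ rootMultiplicity p A₀) ∧
                 (B₀ = 0 ∨ 6 ≤ rootMultiplicity p B₀)) := by
  intro n
  induction n using Nat.strong_induction_on with
  | _ n ih =>
  intro A B hAB hdeg
  by_cases hmin : ∃ p : k, (A = 0 ∨ 4 ≤ rootMultiplicity p A) ∧
      (B = 0 ∨ 6 ≤ rootMultiplicity p B)
  · obtain ⟨p, hA, hB⟩ := hmin
    by_cases hA0 : A = 0
    · have hB0 : B ≠ 0 := fun h => hAB ⟨hA0, h⟩
      have hBm : 6 ≤ rootMultiplicity p B := hB.resolve_left hB0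
      obtain ⟨B', hB'⟩ : (X - C p) ^ 6 ∣ B := (le_rootMultiplicity_iff hB0).mp hBm
      have hB'0 : B' ≠ 0 := by rintro rfl; simp at hB'; exact hB0 hB'
      have hdB : B.natDegree = B'.natDegree + 6 := by
        rw [hB', natDegree_mul (pow_ne_zero _ (X_sub_C_ne_zero p)) hB'0,
          natDegree_pow, natDegree_X_sub_C]; ring
      obtain ⟨z', hz', A₀, B₀, hA₀, hB₀, hminz⟩ :=
        ih (0 + B'.natDegree) (by omega) 0 B' (by simp [hB'0]) (by simp)
      have hA₀0 : A₀ = 0 := by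
        rcases mul_eq_zero.mp hA₀.symm with h | h
        · exact h
        · exact absurd h (pow_ne_zero _ hz'.ne_zero)
      refine ⟨(X - C p) * z', (monic_X_sub_C p).mul hz', 0, B₀, by simp [hA0], ?_, ?_⟩
      · rw [hB', hB₀]; ring
      · intro q hq
        exact hminz q ⟨Or.inl hA₀0, hq.2⟩
    · by_cases hB0 : B = 0
      · have hAm : 4 ≤ rootMultiplicity p A := hA.resolve_left hA0
        obtain ⟨A', hA'⟩ : (X - C p) ^ 4 ∣ A := (le_rootMultiplicity_iff hA0).mp hAm
        have hA'0 : A' ≠ 0 := by rintro rfl; simp at hA'; exact hA0 hA'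
        have hdA : A.natDegree = A'.natDegree + 4 := by
          rw [hA', natDegree_mul (pow_ne_zero _ (X_sub_C_ne_zero p)) hA'0,
            natDegree_pow, natDegree_X_sub_C]; ring
        obtain ⟨z', hz', A₀, B₀, hA₀, hB₀, hminz⟩ :=
          ih (A'.natDegree + 0) (by omega) A' 0 (by simp [hA'0]) (by simp)
        have hB₀0 : B₀ = 0 := by
          rcases mul_eq_zero.mp hB₀.symm with h | h
          · exact h
          · exact absurd h (pow_ne_zero _ hz'.ne_zero)
        refine ⟨(X - C p) * z', (monic_X_sub_C p).mul hz', A₀, 0, ?_, by simp [hB0], ?_⟩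
        · rw [hA', hA₀]; ring
        · intro q hq
          exact hminz q ⟨hq.1, Or.inl hB₀0⟩
      · have hAm : 4 ≤ rootMultiplicity p A := hA.resolve_left hA0
        have hBm : 6 ≤ rootMultiplicity p B := hB.resolve_left hB0
        obtain ⟨A', hA'⟩ : (X - C p) ^ 4 ∣ A := (le_rootMultiplicity_iff hA0).mp hAm
        obtain ⟨B', hB'⟩ : (X - C p) ^ 6 ∣ B := (le_rootMultiplicity_iff hB0).mp hBm
        have hA'0 : A' ≠ 0 := by rintro rfl; simp at hA'; exact hA0 hA'
        have hB'0 : B' ≠ 0 := by rintro rfl; simp at hB'; exact hB0 hB'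
        have hdA : A.natDegree = A'.natDegree + 4 := by
          rw [hA', natDegree_mul (pow_ne_zero _ (X_sub_C_ne_zero p)) hA'0,
            natDegree_pow, natDegree_X_sub_C]; ring
        have hdB : B.natDegree = B'.natDegree + 6 := by
          rw [hB', natDegree_mul (pow_ne_zero _ (X_sub_C_ne_zero p)) hB'0,
            natDegree_pow, natDegree_X_sub_C]; ring
        obtain ⟨z', hz', A₀, B₀, hA₀, hB₀, hminz⟩ :=
          ih (A'.natDegree + B'.natDegree) (by omega) A' B' (by simp [hA'0]) (by simp)
        refine ⟨(X - C p) * z', (monic_X_sub_C p).mul hz', A₀, B₀, ?_, ?_, hminz⟩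
        · rw [hA', hA₀]; ring
        · rw [hB', hB₀]; ring
  · push_neg at hmin
    refine ⟨1, monic_one, A, B, by ring, by ring, fun p hp => ?_⟩
    obtain ⟨h1, h2⟩ := hmin p hp.1
    rcases hp.2 with h | h
    · exact h1 h
    · omega

private lemma mult_le {k : Type*} [Field k]
    {A B : k[X]} (hAB : ¬(A = 0 ∧ B = 0)) {z₁ z₂ : k[X]}
    (hz₁ : z₁.Monic) (hz₂ : z₂.Monic)
    (h1 : ∃ A₀ B₀ : k[X], A = A₀ * z₁ ^ 4 ∧ B = B₀ * z₁ ^ 6 ∧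
      ∀ p : k, ¬((A₀ = 0 ∨ 4 ≤ rootMultiplicity p A₀) ∧
                 (B₀ = 0 ∨ 6 ≤ rootMultiplicity p B₀)))
    (h2A : z₂ ^ 4 ∣ A) (h2B : z₂ ^ 6 ∣ B) :
    ∀ p : k, rootMultiplicity p z₂ ≤ rootMultiplicity p z₁ := by
  obtain ⟨A₀, B₀, hA₀, hB₀, hmin⟩ := h1
  intro p
  by_contra hlt
  push_neg at hlt
  set r₁ := rootMultiplicity p z₁
  set r₂ := rootMultiplicity p z₂
  have hz₁0 : z₁ ≠ 0 := hz₁.ne_zero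
  have hz₂0 : z₂ ≠ 0 := hz₂.ne_zero
  have hd : (X - C p) ^ r₂ ∣ z₂ := pow_rootMultiplicity_dvd z₂ p
  have key : ∀ m : ℕ, (X - C p) ^ (m * r₂) ∣ z₂ ^ m := fun m => by
    rw [mul_comm, pow_mul]; exact pow_dvd_pow_of_dvd hd m
  rcases not_and_or.mp (hmin p) with h | h
  · push_neg at h
    obtain ⟨hA₀0, hA₀m⟩ := h
    have hA0 : A ≠ 0 := by rw [hA₀]; exact mul_ne_zero hA₀0 (pow_ne_zero _ hz₁0)
    have h1 : 4 * r₂ ≤ rootMultiplicity p A :=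
      (le_rootMultiplicity_iff hA0).mpr ((key 4).trans h2A)
    have h2 : rootMultiplicity p A = rootMultiplicity p A₀ + 4 * r₁ := by
      rw [hA₀, rootMultiplicity_mul (by rw [← hA₀]; exact hA0), rm_pow hz₁0]
    omega
  · push_neg at h
    obtain ⟨hB₀0, hB₀m⟩ := h
    have hB0 : B ≠ 0 := by rw [hB₀]; exact mul_ne_zero hB₀0 (pow_ne_zero _ hz₁0)
    have h1 : 6 * r₂ ≤ rootMultiplicity p B :=
      (le_rootMultiplicity_iff hB0).mpr ((key 6).trans h2B)
    have h2 : rootMultiplicity p B = rootMultiplicity p B₀ + 6 * r₁ := by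
      rw [hB₀, rootMultiplicity_mul (by rw [← hB₀]; exact hB0), rm_pow hz₁0]
    omega

private lemma monic_eq_of_rm {k : Type*} [Field k] [IsAlgClosed k] {f g : k[X]}
    (hf : f.Monic) (hg : g.Monic)
    (h : ∀ p, rootMultiplicity p f = rootMultiplicity p g) : f = g := by
  classical
  have hroots : f.roots = g.roots := Multiset.ext.2 fun p => by
    rw [count_roots, count_roots, h]
  calc f = (f.roots.map fun a => X - C a).prod :=
        (IsAlgClosed.splits f).eq_prod_roots_of_monic hf
    _ = (g.roots.map fun a => X - C a).prod := by rw [hroots]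
    _ = g := ((IsAlgClosed.splits g).eq_prod_roots_of_monic hg).symm

/-- **Unique factorization of log canonical Weierstrass data into a minimal pair.**
Let `k` be an algebraically closed field and `A, B ∈ k[t]` not both zero.  Then there is a
unique monic polynomial `z ∈ k[t]` such that `z⁴ ∣ A`, `z⁶ ∣ B` (witnessed by quotients
`A₀`, `B₀` with `A = A₀·z⁴`, `B = B₀·z⁶`) and the pair `(A₀, B₀)` is minimal: there is no
point `p ∈ k` at which `A₀` vanishes to order at least `4` and simultaneously `B₀` vanishes
to order at least `6` (the zero polynomial vanishing to every order at every point). -/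
theorem stmt_1 {k : Type*} [Field k] [IsAlgClosed k]
    (A B : k[X]) (hAB : ¬(A = 0 ∧ B = 0)) :
    ∃! z : k[X], z.Monic ∧ ∃ A₀ B₀ : k[X], A = A₀ * z ^ 4 ∧ B = B₀ * z ^ 6 ∧
      ∀ p : k, ¬(((A₀ = 0 ∨ 4 ≤ rootMultiplicity p A₀)) ∧
                 ((B₀ = 0 ∨ 6 ≤ rootMultiplicity p B₀))) := by
  obtain ⟨z, hz, hwit⟩ := ex_aux (A.natDegree + B.natDegree) A B hAB le_rfl
  refine ⟨z, ⟨hz, hwit⟩, ?_⟩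
  rintro y ⟨hy, ywit⟩
  have hzy : ∀ p, rootMultiplicity p z ≤ rootMultiplicity p y := by
    obtain ⟨A₀, B₀, hA₀, hB₀, _⟩ := hwit
    exact mult_le hAB hy hz ywit ⟨A₀, by rw [hA₀]; ring⟩ ⟨B₀, by rw [hB₀]; ring⟩
  have hyz : ∀ p, rootMultiplicity p y ≤ rootMultiplicity p z := by
    obtain ⟨A₀, B₀, hA₀, hB₀, _⟩ := ywit
    exact mult_le hAB hz hy hwit ⟨A₀, by rw [hA₀]; ring⟩ ⟨B₀, by rw [hB₀]; ring⟩
  exact monic_eq_of_rm hy hz fun p => le_antisymm (hyz p) (hzy p)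
end

section
/- Let R be a nontrivial commutative ring (in the paper, an Artinian local algebra over a field) and let n ≥ 2 be an integer. Let S = R[x,y] be the polynomial ring in two variables and let A = S[t]/(tⁿ − 1, (t−1)·x, (t−1)·y), regarded as an S-module via the natural ring map S → A. Then the annihilator of the S-module A/(image of S) (the cokernel of the structure map S → A) is exactly the ideal (x, y) of S. (This computes the scheme-theoretic support of the cokernel of O_{A²} → f_*O_I for the inertia stack of [A²_R/μ_n] with the diagonal weight-1 action: it is defined by the ideal (x, y).) -/
open Polynomial

noncomputable section

/-- `S = R[x,y]`, the polynomial ring in two variables over `R`. -/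
abbrev TwoVarPoly (R : Type*) [CommRing R] : Type _ := MvPolynomial (Fin 2) R

/-- The ideal `(tⁿ − 1, (t−1)·x, (t−1)·y)` of `S[t]`. -/
abbrev inertiaIdeal2 (R : Type*) [CommRing R] (n : ℕ) : Ideal (Polynomial (TwoVarPoly R)) :=
  Ideal.span {X ^ n - 1,
    (X - 1) * C (MvPolynomial.X 0),
    (X - 1) * C (MvPolynomial.X 1)}

/-- `A = S[t]/(tⁿ − 1, (t−1)·x, (t−1)·y)`, an `S`-algebra. -/
abbrev InertiaAlg2 (R : Type*) [CommRing R] (n : ℕ) : Type _ :=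
  Polynomial (TwoVarPoly R) ⧸ inertiaIdeal2 R n

section aux
variable {R : Type*} [CommRing R] {n : ℕ}

lemma algebraMap_eq_mk_C (p : TwoVarPoly R) :
    (algebraMap (TwoVarPoly R) (InertiaAlg2 R n) : TwoVarPoly R →+* InertiaAlg2 R n) p = Ideal.Quotient.mk (inertiaIdeal2 R n) (C p) := rfl

lemma smul_mk (p : TwoVarPoly R) (q : Polynomial (TwoVarPoly R)) :
    p • (Ideal.Quotient.mk (inertiaIdeal2 R n) q) = Ideal.Quotient.mk _ (C p * q) := by
  show Ideal.Quotient.mk _ (p • q) = _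
  rw [smul_eq_C_mul]

lemma mem_ann_iff (p : TwoVarPoly R) :
    p ∈ (⊤ : Submodule (TwoVarPoly R)
        ((InertiaAlg2 R n) ⧸
          LinearMap.range (Algebra.linearMap (TwoVarPoly R) (InertiaAlg2 R n)))).annihilator ↔
    ∀ q : Polynomial (TwoVarPoly R),
      ∃ s : TwoVarPoly R, C p * q - C s ∈ inertiaIdeal2 R n := by
  rw [Submodule.mem_annihilator]
  constructor
  · intro h q
    have := h (Submodule.Quotient.mk (Ideal.Quotient.mk _ q)) trivial
    rw [← Submodule.Quotient.mk_smul, Submodule.Quotient.mk_eq_zero, smul_mk,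
      LinearMap.mem_range] at this
    obtain ⟨s, hs⟩ := this
    refine ⟨s, ?_⟩
    rw [← Ideal.Quotient.eq]
    exact ((algebraMap_eq_mk_C s).symm.trans hs).symm
  · intro h m _
    obtain ⟨a, rfl⟩ := Submodule.Quotient.mk_surjective _ m
    obtain ⟨q, rfl⟩ := Ideal.Quotient.mk_surjective a
    rw [← Submodule.Quotient.mk_smul, Submodule.Quotient.mk_eq_zero, smul_mk, LinearMap.mem_range]
    obtain ⟨s, hs⟩ := h q
    exact ⟨s, (algebraMap_eq_mk_C s).trans (Ideal.Quotient.eq.mpr hs).symm⟩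

end aux

/-- **Support of the cokernel of `O_{A²} → f_* O_I` for the inertia stack of `[A²_R/μ_n]`.**
For a nontrivial commutative ring `R` and `n ≥ 2`, the annihilator of the `S`-module
`A / (image of S)` — the cokernel of the structure map `S → A`, where `S = R[x,y]` and
`A = S[t]/(tⁿ − 1, (t−1)x, (t−1)y)` — is exactly the ideal `(x, y)` of `S`. -/
theorem stmt_2 (R : Type*) [CommRing R] [Nontrivial R] (n : ℕ) (hn : 2 ≤ n) :
    (⊤ : Submodule (TwoVarPoly R)
        ((InertiaAlg2 R n) ⧸
          LinearMap.range (Algebra.linearMap (TwoVarPoly R) (InertiaAlg2 R n)))).annihilator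
      = Ideal.span {MvPolynomial.X 0, MvPolynomial.X 1} := by
  apply le_antisymm
  · intro p hp
    rw [mem_ann_iff] at hp
    obtain ⟨s, hs⟩ := hp X
    -- map down to R[X] by constant coefficient
    set ψ : Polynomial (TwoVarPoly R) →+* Polynomial R :=
      Polynomial.mapRingHom (MvPolynomial.constantCoeff) with hψ
    have hmap : (inertiaIdeal2 R n).map ψ ≤ Ideal.span {(X : Polynomial R) ^ n - 1} := by
      rw [Ideal.map_span, Ideal.span_le]
      rintro _ ⟨g, hg, rfl⟩
      simp only [Set.mem_insert_iff, Set.mem_singleton_iff] at hg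
      rcases hg with rfl | rfl | rfl
      · apply Ideal.subset_span
        simp [hψ]
      · simp [hψ]
      · simp [hψ]
    have h1 : ψ (C p * X - C s) ∈ Ideal.span {(X : Polynomial R) ^ n - 1} :=
      hmap (Ideal.mem_map_of_mem ψ hs)
    rw [map_sub, map_mul] at h1
    simp only [hψ, coe_mapRingHom, map_C, map_X] at h1
    rw [Ideal.mem_span_singleton] at h1
    obtain ⟨w, hw⟩ := h1
    set p0 := MvPolynomial.constantCoeff p with hp0def
    have hp0 : p0 = 0 := by
      by_cases hw0 : w = 0
      · rw [hw0, mul_zero, sub_eq_zero] at hw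
        have := congrArg (fun f => Polynomial.coeff f 1) hw
        simpa using this
      · exfalso
        have hmonic : ((X : Polynomial R) ^ n - 1).Monic := by
          simpa using monic_X_pow_sub_C (1 : R) (by omega : n ≠ 0)
        have hdeg : (((X : Polynomial R) ^ n - 1) * w).natDegree = n + w.natDegree := by
          rw [hmonic.natDegree_mul' (by simpa using hw0)]
          congr 1
          simpa using natDegree_X_pow_sub_C (R := R) (n := n) (r := (1:R))
        have h1 : (C p0 * X : R[X]).natDegree ≤ 1 :=
          (natDegree_C_mul_le _ _).trans (by simp)
        have h2 : (C (MvPolynomial.constantCoeff s) : R[X]).natDegree ≤ 1 := by simp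
        have hle : (C p0 * X - C (MvPolynomial.constantCoeff s)).natDegree ≤ 1 :=
          (natDegree_sub_le _ _).trans (max_le h1 h2)
        rw [hw, hdeg] at hle
        omega
    -- conclude p ∈ (x, y)
    have : Ideal.span {(MvPolynomial.X 0 : TwoVarPoly R), MvPolynomial.X 1}
        = Ideal.span (MvPolynomial.X '' (Set.univ : Set (Fin 2))) := by
      congr 1
      rw [Set.image_univ]
      ext z
      simp [Fin.exists_fin_two, eq_comm]
    rw [this, MvPolynomial.mem_ideal_span_X_image]
    intro m hm
    rcases eq_or_ne m 0 with rfl | hm0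
    · exact absurd (by simpa [hp0def, MvPolynomial.constantCoeff_eq] using hp0)
        (MvPolynomial.mem_support_iff.mp hm)
    · obtain ⟨i, hi⟩ := Finsupp.ne_iff.mp hm0
      exact ⟨i, Set.mem_univ i, by simpa using hi⟩
  · rw [Ideal.span_le]
    rintro z hz
    simp only [Set.mem_insert_iff, Set.mem_singleton_iff] at hz
    have key : ∀ v : TwoVarPoly R,
        (X - 1) * C v ∈ inertiaIdeal2 R n →
        v ∈ (⊤ : Submodule (TwoVarPoly R)
        ((InertiaAlg2 R n) ⧸
          LinearMap.range (Algebra.linearMap (TwoVarPoly R) (InertiaAlg2 R n)))).annihilator := by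
      intro v hv
      rw [mem_ann_iff]
      intro q
      refine ⟨v * q.eval 1, ?_⟩
      obtain ⟨u, hu⟩ := X_sub_C_dvd_sub_C_eval (a := (1 : TwoVarPoly R)) (p := q)
      have h1 : q - C (q.eval 1) = (X - 1) * u := by simpa using hu
      have : C v * q - C (v * q.eval 1) = ((X - 1) * C v) * u := by
        calc C v * q - C (v * q.eval 1) = C v * (q - C (q.eval 1)) := by rw [map_mul]; ring
        _ = ((X - 1) * C v) * u := by rw [h1]; ring
      rw [this]
      exact Ideal.mul_mem_right _ _ hv
    rcases hz with rfl | rfl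
    · exact key _ (Ideal.subset_span (by simp))
    · exact key _ (Ideal.subset_span (by simp))
end
end

section
/- Let R be a nontrivial commutative ring (in the paper, an Artinian local ring) and let n ≥ 2 be an integer. Let S = R[x,y,z]/(x·y − z²) and let A = S[t]/(tⁿ − 1, (t−1)·x, (t−1)·y, (t−1)·z), regarded as an S-module via the natural ring map S → A. Then the annihilator of the S-module A/(image of S) (the cokernel of the structure map S → A) is exactly the ideal (x, y, z) of S. (This computes the scheme-theoretic support of the cokernel of O_Z → f_*O_I for the inertia stack of [Z/μ_n], Z the quadric cone xy = z² with the diagonal weight-1 μ_n-action: it is the vanishing locus of (x, y, z).) -/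
open Polynomial

set_option synthInstance.maxHeartbeats 1000000
set_option maxHeartbeats 1000000

noncomputable section

/-- The ideal `(x·y − z²)` of `R[x,y,z]`. -/
abbrev coneIdeal (R : Type*) [CommRing R] : Ideal (MvPolynomial (Fin 3) R) :=
  Ideal.span {MvPolynomial.X 0 * MvPolynomial.X 1 - MvPolynomial.X 2 ^ 2}

/-- `S = R[x,y,z]/(x·y − z²)`, the coordinate ring of the quadric cone over `R`. -/
abbrev ConeRing (R : Type*) [CommRing R] : Type _ :=
  MvPolynomial (Fin 3) R ⧸ coneIdeal R

instance (R : Type*) [CommRing R] : CommRing (ConeRing R) :=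
  Ideal.Quotient.commRing (coneIdeal R)

/-- The images `x, y, z` of the three variables in `S = R[x,y,z]/(xy − z²)`. -/
def coneVar (R : Type*) [CommRing R] (i : Fin 3) : ConeRing R :=
  Ideal.Quotient.mk (coneIdeal R) (MvPolynomial.X i)

/-- The ideal `(tⁿ − 1, (t−1)·x, (t−1)·y, (t−1)·z)` of `S[t]`. -/
abbrev inertiaIdeal3 (R : Type*) [CommRing R] (n : ℕ) : Ideal (Polynomial (ConeRing R)) :=
  Ideal.span {X ^ n - 1,
    (X - 1) * C (coneVar R 0),
    (X - 1) * C (coneVar R 1),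
    (X - 1) * C (coneVar R 2)}

/-- `A = S[t]/(tⁿ − 1, (t−1)·x, (t−1)·y, (t−1)·z)`, an `S`-algebra. -/
abbrev InertiaAlg3 (R : Type*) [CommRing R] (n : ℕ) : Type _ :=
  Polynomial (ConeRing R) ⧸ inertiaIdeal3 R n

/-- Evaluation of the cone ring at the origin. -/
def coneEval (R : Type*) [CommRing R] : ConeRing R →+* R :=
  Ideal.Quotient.lift (coneIdeal R) (MvPolynomial.eval (0 : Fin 3 → R)) (by
    intro a ha
    rw [Ideal.mem_span_singleton] at ha
    obtain ⟨q, rfl⟩ := ha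
    simp)

lemma coneEval_ker {R : Type*} [CommRing R] (s : ConeRing R) (hs : coneEval R s = 0) :
    s ∈ Ideal.span {coneVar R 0, coneVar R 1, coneVar R 2} := by
  obtain ⟨p, rfl⟩ := Ideal.Quotient.mk_surjective s
  have hp : MvPolynomial.eval (0 : Fin 3 → R) p = 0 := hs
  have hmem : p ∈ Ideal.span (MvPolynomial.X '' (Set.univ : Set (Fin 3)) :
      Set (MvPolynomial (Fin 3) R)) := by
    rw [MvPolynomial.mem_ideal_span_X_image]
    intro m hm
    by_cases h0 : m = 0
    · exfalso
      subst h0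
      rw [MvPolynomial.mem_support_iff] at hm
      apply hm
      rw [MvPolynomial.eval_zero] at hp
      exact hp
    · obtain ⟨i, hi⟩ := Finsupp.ne_iff.mp h0
      exact ⟨i, Set.mem_univ i, by simpa using hi⟩
  have him : Ideal.Quotient.mk (coneIdeal R) p ∈
      Ideal.map (Ideal.Quotient.mk (coneIdeal R))
        (Ideal.span (MvPolynomial.X '' (Set.univ : Set (Fin 3)) :
          Set (MvPolynomial (Fin 3) R))) := Ideal.mem_map_of_mem _ hmem
  rw [Ideal.map_span] at him
  refine Ideal.span_le.mpr ?_ him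
  rintro _ ⟨_, ⟨i, -, rfl⟩, rfl⟩
  fin_cases i
  · exact Ideal.subset_span (by left; rfl)
  · exact Ideal.subset_span (by right; left; rfl)
  · exact Ideal.subset_span (by right; right; rfl)

/-- **Support of the cokernel of `O_Z → f_* O_I` for the inertia stack of `[Z/μ_n]`,
`Z` the quadric cone `xy = z²`.**  For a nontrivial commutative ring `R` and `n ≥ 2`,
the annihilator of the `S`-module `A / (image of S)` — the cokernel of the structure map
`S → A`, where `S = R[x,y,z]/(xy − z²)` and `A = S[t]/(tⁿ − 1, (t−1)x, (t−1)y, (t−1)z)` —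
is exactly the ideal `(x, y, z)` of `S`. -/
theorem stmt_3 (R : Type*) [CommRing R] [Nontrivial R] (n : ℕ) (hn : 2 ≤ n) :
    (⊤ : Submodule (ConeRing R)
        ((InertiaAlg3 R n) ⧸
          LinearMap.range (Algebra.linearMap (ConeRing R) (InertiaAlg3 R n)))).annihilator
      = Ideal.span {coneVar R 0, coneVar R 1, coneVar R 2} := by
  apply le_antisymm
  · -- annihilator ≤ span
    intro s hs
    rw [Submodule.mem_annihilator] at hs
    have hX := hs (Submodule.Quotient.mk (Ideal.Quotient.mk (inertiaIdeal3 R n) X))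
      Submodule.mem_top
    rw [← Submodule.Quotient.mk_smul, Submodule.Quotient.mk_eq_zero] at hX
    obtain ⟨c, hc⟩ := hX
    have hc' : Ideal.Quotient.mk (inertiaIdeal3 R n) (C c) =
        Ideal.Quotient.mk (inertiaIdeal3 R n) (C s * X) := by
      have h1 : (Algebra.linearMap (ConeRing R) (InertiaAlg3 R n)) c =
          Ideal.Quotient.mk (inertiaIdeal3 R n) (C c) := rfl
      have h2 : s • (Ideal.Quotient.mk (inertiaIdeal3 R n) X) =
          Ideal.Quotient.mk (inertiaIdeal3 R n) (C s * X) := by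
        rw [show (Ideal.Quotient.mk (inertiaIdeal3 R n)) =
          (Ideal.Quotient.mkₐ (ConeRing R) (inertiaIdeal3 R n) : Polynomial (ConeRing R) → _) from rfl,
          ← map_smul, Polynomial.smul_eq_C_mul]
      rw [h1, h2] at hc
      exact hc
    rw [Ideal.Quotient.eq] at hc'
    -- push to R[X]
    set ψ : Polynomial (ConeRing R) →+* Polynomial R := Polynomial.mapRingHom (coneEval R)
      with hψ
    have hmap : Ideal.map ψ (inertiaIdeal3 R n) ≤ Ideal.span {(X : R[X]) ^ n - 1} := by
      rw [Ideal.map_span, Ideal.span_le]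
      rintro _ ⟨g, hg, rfl⟩
      simp only [Set.mem_insert_iff, Set.mem_singleton_iff] at hg
      have hv : ∀ i, coneEval R (coneVar R i) = 0 := by
        intro i
        show MvPolynomial.eval (0 : Fin 3 → R) (MvPolynomial.X i) = 0
        simp
      rcases hg with rfl | rfl | rfl | rfl
      · apply Ideal.subset_span
        simp [hψ]
      all_goals
        simp [hψ, hv]
    have hin : ψ (C c - C s * X) ∈ Ideal.span {(X : R[X]) ^ n - 1} :=
      hmap (Ideal.mem_map_of_mem ψ hc')
    have heq : ψ (C c - C s * X) = C (coneEval R c) - C (coneEval R s) * X := by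
      simp [hψ]
    rw [heq, Ideal.mem_span_singleton] at hin
    obtain ⟨q, hq⟩ := hin
    have hq0 : q = 0 := by
      by_contra hne
      have hmonic : ((X : R[X]) ^ n - 1).Monic := by
        have := Polynomial.monic_X_pow_sub_C (1 : R) (by omega : n ≠ 0)
        simpa using this
      have hdeg : ((X : R[X]) ^ n - 1).natDegree = n := by
        have : ((X : R[X]) ^ n - C 1).natDegree = n := Polynomial.natDegree_X_pow_sub_C
        simpa using this
      have h1 : (C (coneEval R c) - C (coneEval R s) * X).natDegree ≤ 1 := by
        refine le_trans (Polynomial.natDegree_sub_le _ _) ?_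
        simp only [Polynomial.natDegree_C, max_le_iff]
        constructor
        · omega
        · exact le_trans (Polynomial.natDegree_mul_le) (by simp)
      rw [hq, hmonic.natDegree_mul' hne, hdeg] at h1
      omega
    rw [hq0, mul_zero, sub_eq_zero] at hq
    have hs0 : coneEval R s = 0 := by
      have := congrArg (fun p => Polynomial.coeff p 1) hq
      simpa [Polynomial.coeff_C] using this.symm
    exact coneEval_ker s hs0
  · -- span ≤ annihilator
    rw [Ideal.span_le]
    have key : ∀ (v : ConeRing R), (X - 1) * C v ∈ inertiaIdeal3 R n →
        v ∈ (⊤ : Submodule (ConeRing R)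
          ((InertiaAlg3 R n) ⧸
            LinearMap.range (Algebra.linearMap (ConeRing R) (InertiaAlg3 R n)))).annihilator := by
      intro v hv
      rw [Submodule.mem_annihilator]
      intro m _
      obtain ⟨a, rfl⟩ := Submodule.Quotient.mk_surjective _ m
      obtain ⟨p, rfl⟩ := Ideal.Quotient.mk_surjective a
      rw [← Submodule.Quotient.mk_smul, Submodule.Quotient.mk_eq_zero]
      refine ⟨v * p.eval 1, ?_⟩
      show (Algebra.linearMap (ConeRing R) (InertiaAlg3 R n)) (v * p.eval 1) = _
      have hsm : v • Ideal.Quotient.mk (inertiaIdeal3 R n) p =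
          Ideal.Quotient.mk (inertiaIdeal3 R n) (C v * p) := by
        rw [show (Ideal.Quotient.mk (inertiaIdeal3 R n)) =
          (Ideal.Quotient.mkₐ (ConeRing R) (inertiaIdeal3 R n) : Polynomial (ConeRing R) → _) from rfl,
          ← map_smul, Polynomial.smul_eq_C_mul]
      rw [hsm]
      show Ideal.Quotient.mk (inertiaIdeal3 R n) (C (v * p.eval 1)) = _
      rw [Ideal.Quotient.eq]
      have hdvd : (X - C 1) ∣ (p - C (p.eval 1)) := by
        rw [Polynomial.dvd_iff_isRoot]
        simp [Polynomial.IsRoot]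
      obtain ⟨q, hq⟩ := hdvd
      have : C (v * p.eval 1) - C v * p = -((X - 1) * C v * q) := by
        rw [map_mul]
        have : C v * p - C v * C (p.eval 1) = C v * ((X - C 1) * q) := by
          rw [← hq]; ring
        simp only [map_one] at this ⊢
        linear_combination -this
      rw [this]
      exact neg_mem (Ideal.mul_mem_right q (inertiaIdeal3 R n) hv)
    intro v hv
    simp only [Set.mem_insert_iff, Set.mem_singleton_iff] at hv
    rcases hv with rfl | rfl | rfl
    · exact key _ (Ideal.subset_span (by right; left; rfl))
    · exact key _ (Ideal.subset_span (by right; right; left; rfl))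
    · exact key _ (Ideal.subset_span (by right; right; right; rfl))
end
end

section
/- Let Π be a stable pruned tree (i.e., wt(v) > 0 for every vertex v) of height 3, that is, with Σ_v (jdeg(v) + Σ_{t ∈ T(v)} t + |F(v)|) = 3. Then Π has at most two leaves; equivalently, the underlying tree is a chain (every vertex has degree at most 2). (Each leaf v has wt(v) = −1 + c(v) > 0, hence contribution c(v) > 1; three leaves would give total contribution > 3, contradicting height 3, since every vertex has c(v) ≥ 0.) -/
noncomputable section

/-- The allowed slicing pairs `(e_v, e_w)` for a sliced edge, in either order:
`(1/2,1/2)`, `(1/3,2/3)`, `(1/4,3/4)`, `(1/6,5/6)`. -/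
def allowedSlicings : Set (ℚ × ℚ) :=
  {(1/2, 1/2), (1/3, 2/3), (2/3, 1/3), (1/4, 3/4), (3/4, 1/4), (1/6, 5/6), (5/6, 1/6)}

/-- The set of allowed klt-markings `{1/6, 1/4, 1/3, 1/2, 2/3, 3/4, 5/6}`. -/
def kltMarkingSet : Set ℚ := {1/6, 1/4, 1/3, 1/2, 2/3, 3/4, 5/6}

/-- A *pruned tree* on a vertex type `V`: a tree `G` on `V`, a set `E₀` of sliced edges with
a slicing `(slice v w, slice w v)` taken from the allowed list for each sliced edge `s(v,w)`,
a function `jdeg : V → ℚ` with nonnegative values in `(1/12)·ℤ`, and for each vertex a finite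
multiset `klt v` of klt-markings and a number `lc v` recording the cardinality of the finite
set `F(v)` of lc-markings.  (A sliced tree is a pruned tree with no markings.) -/
structure PrunedTree (V : Type) where
  /-- the underlying graph -/
  G : SimpleGraph V
  /-- the underlying graph is a tree -/
  isTree : G.IsTree
  /-- the set of sliced edges -/
  E₀ : Set (Sym2 V)
  E₀_subset : E₀ ⊆ G.edgeSet
  /-- `slice v w` is the slicing `e_v` at `v` of the sliced edge `e = s(v,w)`
  (junk value if `s(v,w)` is not a sliced edge) -/
  slice : V → V → ℚ
  slice_mem_allowed : ∀ v w : V, s(v, w) ∈ E₀ → (slice v w, slice w v) ∈ allowedSlicings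
  /-- the degree of the `j`-map divided by 12 -/
  jdeg : V → ℚ
  jdeg_nonneg : ∀ v, 0 ≤ jdeg v
  jdeg_twelfth : ∀ v, ∃ m : ℤ, jdeg v = (m : ℚ) / 12
  /-- the multiset `T(v)` of klt-markings at `v` -/
  klt : V → Multiset ℚ
  /-- the cardinality `|F(v)|` of the set of lc-markings at `v` -/
  lc : V → ℕ

namespace PrunedTree

variable {V : Type}

/-- The degree of a vertex: the number of edges incident to it. -/
def deg (P : PrunedTree V) (v : V) : ℕ := (P.G.neighborSet v).ncard

/-- The contribution `c(v) = jdeg(v) + Σ_{t ∈ T(v)} t + |F(v)|` of a vertex. -/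
def contrib (P : PrunedTree V) (v : V) : ℚ :=
  P.jdeg v + (P.klt v).sum + (P.lc v : ℚ)

/-- The weight `wt(v) = deg(v) − 2 + c(v)` of a vertex. -/
def wt (P : PrunedTree V) (v : V) : ℚ := (P.deg v : ℚ) - 2 + P.contrib v

/-- The height `Σ_v c(v)` of a pruned tree. -/
def height [Fintype V] (P : PrunedTree V) : ℚ := ∑ v : V, P.contrib v

/-- The total weight `Σ_v wt(v)` of a pruned tree. -/
def totalWeight [Fintype V] (P : PrunedTree V) : ℚ := ∑ v : V, P.wt v

/-- A leaf is a vertex of degree 1. -/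
def IsLeaf (P : PrunedTree V) (v : V) : Prop := P.deg v = 1

/-- The sum `Σ_{e ∈ E₀(v)} e_v` of the slicings at `v` of the sliced edges incident to `v`. -/
def slicedSum (P : PrunedTree V) (v : V) : ℚ :=
  ∑ᶠ w ∈ {w : V | s(v, w) ∈ P.E₀}, P.slice v w

/-- `IsPruneStep P v P' ι` says that the pruned tree `P'` (with vertex type `W`, identified
with `V \ {v}` via the injection `ι`) is obtained from `P` by the pruning step at the leaf
`v` of weight `wt(v) ≤ 0`: delete `v` and its edge, and with `t := wt(v) + 1`, add one new
lc-marking at the neighbour `w` of `v` if `t = 1`, change nothing if `t = 0`, and otherwise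
add `t` to `T(w)` as a new klt-marking. -/
def IsPruneStep {W : Type} (P : PrunedTree V) (v : V) (P' : PrunedTree W) (ι : W → V) :
    Prop :=
  P.IsLeaf v ∧ P.wt v ≤ 0 ∧
  Function.Injective ι ∧ Set.range ι = {u : V | u ≠ v} ∧
  (∀ a b : W, P'.G.Adj a b ↔ P.G.Adj (ι a) (ι b)) ∧
  (∀ a b : W, s(a, b) ∈ P'.E₀ ↔ s(ι a, ι b) ∈ P.E₀) ∧
  (∀ a b : W, P'.slice a b = P.slice (ι a) (ι b)) ∧
  (∀ u : W, P'.jdeg u = P.jdeg (ι u)) ∧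
  ∃ w : W, P.G.Adj v (ι w) ∧
    (∀ u : W, u ≠ w → P'.klt u = P.klt (ι u) ∧ P'.lc u = P.lc (ι u)) ∧
    (P.wt v + 1 = 1 → P'.klt w = P.klt (ι w) ∧ P'.lc w = P.lc (ι w) + 1) ∧
    (P.wt v + 1 = 0 → P'.klt w = P.klt (ι w) ∧ P'.lc w = P.lc (ι w)) ∧
    (P.wt v + 1 ≠ 1 → P.wt v + 1 ≠ 0 →
      P'.klt w = (P.wt v + 1) ::ₘ P.klt (ι w) ∧ P'.lc w = P.lc (ι w))

end PrunedTree

/-! Summing `wt v = deg v - 2 + c v` over a tree gives total weight `height - 2 = 1`.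
A leaf has `c v > 1`, so three leaves would already exceed height `3`; a vertex of degree
`≥ 3` has weight `≥ 1`, which together with a neighbour of positive weight exceeds total
weight `1`. -/

namespace PrunedTree

variable {V : Type} (P : PrunedTree V)

lemma nonneg_of_mem_kltMarkingSet {t : ℚ} (ht : t ∈ kltMarkingSet) : 0 ≤ t := by
  simp only [kltMarkingSet, Set.mem_insert_iff, Set.mem_singleton_iff] at ht
  rcases ht with rfl | rfl | rfl | rfl | rfl | rfl | rfl <;> norm_num

lemma contrib_nonneg {v : V} (hT : ∀ t ∈ P.klt v, 0 ≤ t) : 0 ≤ P.contrib v :=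
  add_nonneg (add_nonneg (P.jdeg_nonneg v) (Multiset.sum_nonneg hT)) (Nat.cast_nonneg _)

lemma deg_eq_degree [Fintype V] [DecidableRel P.G.Adj] (v : V) : P.deg v = P.G.degree v := by
  rw [deg, ← Nat.card_coe_set_eq, Nat.card_eq_fintype_card,
    SimpleGraph.card_neighborSet_eq_degree]

lemma one_lt_contrib_of_isLeaf {v : V} (hv : P.IsLeaf v) (hwt : 0 < P.wt v) :
    1 < P.contrib v := by
  rw [wt, hv] at hwt
  push_cast at hwt
  linarith

lemma sum_deg_eq_two_mul_card_sub_two [Fintype V] :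
    ∑ v, (P.deg v : ℚ) = 2 * Fintype.card V - 2 := by
  classical
  have hedges := P.isTree.card_edgeFinset
  have hdeg : ∑ v, P.deg v = 2 * P.G.edgeFinset.card := by
    simp only [deg_eq_degree, P.G.sum_degrees_eq_twice_card_edges]
  have : (∑ v, P.deg v : ℚ) = 2 * P.G.edgeFinset.card := by exact_mod_cast hdeg
  rw [← hedges, this]
  push_cast
  ring

lemma totalWeight_eq [Fintype V] : P.totalWeight = P.height - 2 := by
  simp only [totalWeight, height, wt, Finset.sum_add_distrib, Finset.sum_sub_distrib,
    sum_deg_eq_two_mul_card_sub_two, Finset.sum_const, Finset.card_univ, nsmul_eq_mul]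
  ring

variable [Fintype V] (hc : ∀ v, 0 ≤ P.contrib v)
include hc

lemma card_lt_height_of_isLeaf {s : Finset V} (hs : s.Nonempty) (hleaf : ∀ v ∈ s, P.IsLeaf v)
    (hstable : ∀ v ∈ s, 0 < P.wt v) : (s.card : ℚ) < P.height :=
  calc (s.card : ℚ) = ∑ _v ∈ s, 1 := by simp
    _ < ∑ v ∈ s, P.contrib v :=
      Finset.sum_lt_sum_of_nonempty hs fun v hv => P.one_lt_contrib_of_isLeaf (hleaf v hv)
        (hstable v hv)
    _ ≤ P.height := Finset.sum_le_sum_of_subset_of_nonneg (Finset.subset_univ s)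
      fun v _ _ => hc v

lemma ncard_setOf_isLeaf_lt_height (hstable : ∀ v, 0 < P.wt v)
    (hleaves : {v | P.IsLeaf v}.Nonempty) : ({v | P.IsLeaf v}.ncard : ℚ) < P.height := by
  classical
  have hfilter : {v | P.IsLeaf v} = ↑(Finset.univ.filter P.IsLeaf) := by simp
  rw [hfilter, Finset.coe_nonempty] at hleaves
  rw [hfilter, Set.ncard_coe_finset]
  exact P.card_lt_height_of_isLeaf hc hleaves (fun v hv => (Finset.mem_filter.mp hv).2)
    fun v _ => hstable v

lemma deg_le_two (hstable : ∀ v, 0 < P.wt v) (htotal : P.totalWeight ≤ 1) (v : V) :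
    P.deg v ≤ 2 := by
  classical
  by_contra! hdeg
  obtain ⟨u, hvu⟩ : ∃ u, P.G.Adj v u := by
    rw [← SimpleGraph.degree_pos_iff_exists_adj, ← deg_eq_degree]
    omega
  have hwt_v : 1 ≤ P.wt v := by
    have : (3 : ℚ) ≤ P.deg v := by exact_mod_cast hdeg
    linarith [hc v, show P.wt v = P.deg v - 2 + P.contrib v from rfl]
  have hpair : P.wt v + P.wt u ≤ P.totalWeight := by
    rw [← Finset.sum_pair (P.G.ne_of_adj hvu)]
    exact Finset.sum_le_sum_of_subset_of_nonneg (Finset.subset_univ _)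
      fun w _ _ => (hstable w).le
  linarith [hstable u]

end PrunedTree

theorem stmt_10_general {V : Type} [Fintype V] (P : PrunedTree V)
    (hT : ∀ v : V, ∀ t ∈ P.klt v, t ∈ kltMarkingSet)
    (hstable : ∀ v : V, 0 < P.wt v)
    (hheight : P.height = 3) :
    {v : V | P.IsLeaf v}.ncard ≤ 2 ∧ ∀ v : V, P.deg v ≤ 2 := by
  have hc : ∀ v, 0 ≤ P.contrib v := fun v =>
    P.contrib_nonneg fun t ht => PrunedTree.nonneg_of_mem_kltMarkingSet (hT v t ht)
  refine ⟨?_, P.deg_le_two hc hstable (by rw [P.totalWeight_eq, hheight]; norm_num)⟩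
  by_contra! hleaves
  have hlt :=
    P.ncard_setOf_isLeaf_lt_height hc hstable (Set.nonempty_of_ncard_ne_zero (by omega))
  have : (3 : ℚ) ≤ {v | P.IsLeaf v}.ncard := by exact_mod_cast hleaves
  linarith

/-- **A stable pruned tree of height 3 is a chain.**
Let `Π` be a stable pruned tree (i.e., `wt(v) > 0` for every vertex) of height `3`, with
klt-markings from the allowed set and satisfying the sliced-tree integrality condition.
Then `Π` has at most two leaves; equivalently, the underlying tree is a chain, i.e. every
vertex has degree at most `2`. -/
theorem stmt_10 {V : Type} [Fintype V] (P : PrunedTree V)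
    (hT : ∀ v : V, ∀ t ∈ P.klt v, t ∈ kltMarkingSet)
    (hInt : ∀ v : V, ∃ m : ℤ, P.jdeg v + P.slicedSum v = (m : ℚ))
    (hstable : ∀ v : V, 0 < P.wt v)
    (hheight : P.height = 3) :
    {v : V | P.IsLeaf v}.ncard ≤ 2 ∧ ∀ v : V, P.deg v ≤ 2 :=
  stmt_10_general P hT hstable hheight
end
end
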